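/- arXiv:2502.08286 — 3 statements merged into one kernel-verified Lean document; each statement's English description precedes it below -/
import Mathlib

section
/- Assume X and Y are nonempty and bounded. For x ∈ ℝ^n let V(x) = {v ∈ ℝ^p : v ≥ 0, −Dᵀv = Cᵀx + e}. If (x*, y*) ∈ X × Y minimizes z over X × Y with optimal value z*, then z* = min_{x ∈ X} max_{v ∈ V(x)} (g·x − d·v) and z* = max_{v ∈ V(x*)} (g·x* − d·v). -/
/-! For fixed `x`, `z x` is the affine function `y ↦ g ⬝ᵥ x + (Cᵀ x + e) ⬝ᵥ y`, so by linear
programming duality its minimum over the polytope `Y` is the maximum of `g ⬝ᵥ x - d ⬝ᵥ v` over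
`V x`; minimising over `x` then recovers the joint minimum, attained at `x*`.
Strong duality comes from the KKT conditions at a minimiser, i.e. from Farkas' lemma, which is
Hahn–Banach separation from a finitely generated cone. Such a cone is closed because, by the
conic Carathéodory theorem, it is a finite union of images of orthants under injective linear
maps. -/

open Matrix

namespace PointedCone

section Module

variable {ι E : Type*} [Fintype ι] [AddCommGroup E] [Module ℝ E]

lemma mem_hull_image_iff {w : ι → E} {s : Set ι} {x : E} :
    x ∈ hull ℝ (w '' s) ↔ ∃ c : ι → ℝ, 0 ≤ c ∧ Function.support c ⊆ s ∧ ∑ i, c i • w i = x := by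
  classical
  constructor
  · intro hx
    induction hx using Submodule.span_induction with
    | mem x hx =>
      obtain ⟨i, hi, rfl⟩ := hx
      refine ⟨Pi.single i 1, Pi.single_nonneg.2 zero_le_one, ?_, by simp [Pi.single_apply]⟩
      exact Pi.support_single_subset.trans (Set.singleton_subset_iff.2 hi)
    | zero => exact ⟨0, le_rfl, by simp, by simp⟩
    | add x y _ _ hx hy =>
      obtain ⟨c, hc, hcs, rfl⟩ := hx
      obtain ⟨c', hc', hcs', rfl⟩ := hy
      refine ⟨c + c', add_nonneg hc hc', (Function.support_add _ _).trans
        (Set.union_subset hcs hcs'), by simp [add_smul, Finset.sum_add_distrib]⟩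
    | smul r x _ hx =>
      obtain ⟨c, hc, hcs, rfl⟩ := hx
      refine ⟨(r : ℝ) • c, smul_nonneg r.2 hc, (Function.support_const_smul_subset _ _).trans hcs,
        ?_⟩
      simp only [Pi.smul_apply, smul_eq_mul, Finset.smul_sum, mul_smul]; rfl
  · rintro ⟨c, hc, hcs, rfl⟩
    refine Submodule.sum_mem _ fun i _ => ?_
    by_cases hi : c i = 0
    · simp [hi]
    · exact smul_mem _ (hc i) (subset_hull ⟨i, hcs hi, rfl⟩)

lemma exists_nonneg_support_ssubset {w : ι → E} {c : ι → ℝ} (hc : 0 ≤ c)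
    (hdep : ¬ LinearIndepOn ℝ w (Function.support c)) :
    ∃ c' : ι → ℝ, 0 ≤ c' ∧ Function.support c' ⊂ Function.support c ∧
      ∑ i, c' i • w i = ∑ i, c i • w i := by
  classical
  obtain ⟨ν, hνc, hν, i₁, hi₁⟩ : ∃ ν : ι → ℝ, Function.support ν ⊆ Function.support c ∧
      ∑ i, ν i • w i = 0 ∧ ∃ i, 0 < ν i := by
    rw [linearIndepOn_iff] at hdep
    push Not at hdep
    obtain ⟨l, hls, hl, hl0⟩ := hdep
    obtain ⟨i, hi⟩ : ∃ i, l i ≠ 0 := by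
      by_contra! h
      exact hl0 (Finsupp.ext h)
    have hlc : Function.support l ⊆ Function.support c := fun j hj =>
      (Finsupp.mem_supported _ _).1 hls (Finsupp.mem_support_iff.2 hj)
    rw [Finsupp.linearCombination_apply, Finsupp.sum_fintype _ _ (by simp)] at hl
    rcases hi.lt_or_gt with hneg | hpos
    · exact ⟨-l, by simpa using hlc, by simp [hl], i, by simpa using hneg⟩
    · exact ⟨l, hlc, hl, i, hpos⟩
  -- move along `-ν` until the first coefficient of `c` reaches zero
  obtain ⟨i₀, hi₀, hmin⟩ := Finset.exists_min_image (Finset.univ.filter fun i => 0 < ν i)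
    (fun i => c i / ν i) ⟨i₁, by simpa using hi₁⟩
  rw [Finset.mem_filter] at hi₀
  set t := c i₀ / ν i₀
  have ht : 0 ≤ t := div_nonneg (hc i₀) hi₀.2.le
  refine ⟨c - t • ν, fun i => ?_, ?_, ?_⟩
  · rcases le_or_gt (ν i) 0 with hνi | hνi
    · simpa using (mul_nonpos_of_nonneg_of_nonpos ht hνi).trans (hc i)
    · simpa [le_div_iff₀ hνi] using hmin i (by simpa using hνi)
  · rw [Set.ssubset_iff_of_subset]
    · refine ⟨i₀, hνc hi₀.2.ne', ?_⟩
      simp [t, div_mul_cancel₀ _ hi₀.2.ne']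
    · intro i hi
      contrapose! hi
      have : ν i = 0 := Function.notMem_support.1 fun h => hi (hνc h)
      simp_all
  · simp [sub_smul, Finset.sum_sub_distrib, mul_smul, ← Finset.smul_sum, hν]

lemma exists_nonneg_linearIndepOn_support {w : ι → E} {c : ι → ℝ} (hc : 0 ≤ c) :
    ∃ c' : ι → ℝ, 0 ≤ c' ∧ Function.support c' ⊆ Function.support c ∧
      LinearIndepOn ℝ w (Function.support c') ∧ ∑ i, c' i • w i = ∑ i, c i • w i := by
  obtain ⟨c', ⟨hc', hc'c, hsum⟩, hmin⟩ := (InvImage.wf Function.support wellFounded_lt).has_min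
    {c' | 0 ≤ c' ∧ Function.support c' ⊆ Function.support c ∧ ∑ i, c' i • w i = ∑ i, c i • w i}
    ⟨c, hc, subset_rfl, rfl⟩
  refine ⟨c', hc', hc'c, by_contra fun hdep => ?_, hsum⟩
  obtain ⟨c'', hc'', hlt, hsum'⟩ := exists_nonneg_support_ssubset hc' hdep
  exact hmin c'' ⟨hc'', hlt.subset.trans hc'c, hsum'.trans hsum⟩ hlt

end Module

section Topology

variable {ι E : Type*} [Fintype ι] [AddCommGroup E] [Module ℝ E] [TopologicalSpace E]
  [IsTopologicalAddGroup E] [ContinuousSMul ℝ E] [T2Space E]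

lemma isClosed_hull_range_of_linearIndependent {v : ι → E} (hv : LinearIndependent ℝ v) :
    IsClosed (hull ℝ (Set.range v) : Set E) := by
  have : (hull ℝ (Set.range v) : Set E) = Fintype.linearCombination ℝ v '' {c | 0 ≤ c} := by
    ext x
    rw [← Set.image_univ, SetLike.mem_coe, mem_hull_image_iff]
    simp [Fintype.linearCombination_apply]
  rw [this]
  exact (LinearMap.isClosedEmbedding_of_injective (LinearMap.ker_eq_bot.2
    (linearIndependent_iff_injective_fintypeLinearCombination.1 hv))).isClosedMap _ isClosed_Ici

lemma isClosed_hull_image (w : ι → E) (s : Set ι) : IsClosed (hull ℝ (w '' s) : Set E) := by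
  classical
  have : (hull ℝ (w '' s) : Set E) =
      ⋃ t ∈ {t | t ⊆ s ∧ LinearIndepOn ℝ w t}, (hull ℝ (w '' t) : Set E) := by
    ext x
    simp only [Set.mem_iUnion, SetLike.mem_coe, exists_prop]
    constructor
    · intro hx
      obtain ⟨c, hc, hcs, rfl⟩ := mem_hull_image_iff.1 hx
      obtain ⟨c', hc', hc'c, hli, hsum⟩ := exists_nonneg_linearIndepOn_support (w := w) hc
      exact ⟨_, ⟨hc'c.trans hcs, hli⟩, mem_hull_image_iff.2 ⟨c', hc', subset_rfl, hsum⟩⟩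
    · rintro ⟨t, ⟨hts, -⟩, hx⟩
      exact Submodule.span_mono (Set.image_mono hts) hx
  rw [this]
  refine (Set.toFinite _).isClosed_biUnion fun t ⟨_, hli⟩ => ?_
  rw [Set.image_eq_range]
  exact isClosed_hull_range_of_linearIndependent hli

theorem exists_nonneg_of_forall_dual_nonneg [LocallyConvexSpace ℝ E] (w : ι → E) (s : Set ι)
    {b : E} (h : ∀ f : StrongDual ℝ E, (∀ i ∈ s, 0 ≤ f (w i)) → 0 ≤ f b) :
    ∃ c : ι → ℝ, 0 ≤ c ∧ Function.support c ⊆ s ∧ ∑ i, c i • w i = b := by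
  rw [← mem_hull_image_iff]
  by_contra hb
  let K : ProperCone ℝ E := ⟨hull ℝ (w '' s), isClosed_hull_image w s⟩
  obtain ⟨f, hfK, hfb⟩ := K.hyperplane_separation_point hb
  exact hfb.not_ge (h f fun i hi => hfK _ (subset_hull ⟨i, hi, rfl⟩))

end Topology

end PointedCone

namespace Matrix

open Filter Topology

theorem exists_nonneg_of_forall_dotProduct_nonneg {ι κ : Type*} [Fintype ι] [Fintype κ]
    (w : ι → κ → ℝ) (s : Set ι) {b : κ → ℝ} (h : ∀ y, (∀ i ∈ s, 0 ≤ w i ⬝ᵥ y) → 0 ≤ b ⬝ᵥ y) :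
    ∃ c : ι → ℝ, 0 ≤ c ∧ Function.support c ⊆ s ∧ ∑ i, c i • w i = b := by
  refine PointedCone.exists_nonneg_of_forall_dual_nonneg w s fun f hf => ?_
  classical
  obtain ⟨y, hfy⟩ : ∃ y, ∀ x, f x = x ⬝ᵥ y :=
    ⟨_, fun x => by simpa [dotProduct] using (f : (κ → ℝ) →ₗ[ℝ] ℝ).pi_apply_eq_sum_univ x⟩
  simp only [hfy] at hf ⊢
  exact h _ hf

lemma isClosed_setOf_mulVec_le {ι κ : Type*} [Fintype κ] (D : Matrix ι κ ℝ) (d : ι → ℝ) :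
    IsClosed {y | D *ᵥ y ≤ d} :=
  isClosed_le (continuous_const.matrix_mulVec continuous_id) continuous_const

variable {ι κ : Type*} [Fintype ι] [Fintype κ] {D : Matrix ι κ ℝ} {d : ι → ℝ} {c : κ → ℝ}

lemma neg_dotProduct_le_of_dual_feasible {v : ι → ℝ} {y : κ → ℝ} (hv : 0 ≤ v)
    (hvc : -(Dᵀ *ᵥ v) = c) (hy : D *ᵥ y ≤ d) : -(d ⬝ᵥ v) ≤ c ⬝ᵥ y := by
  rw [← hvc, neg_dotProduct, mulVec_transpose, ← dotProduct_mulVec, dotProduct_comm d,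
    neg_le_neg_iff]
  exact dotProduct_le_dotProduct_of_nonneg_left hy hv

lemma eventually_mulVec_add_smul_le {y₀ y : κ → ℝ} (hy₀ : D *ᵥ y₀ ≤ d)
    (hy : ∀ i, (D *ᵥ y₀) i = d i → (D *ᵥ y) i ≤ 0) :
    ∀ᶠ ε in 𝓝[>] (0 : ℝ), D *ᵥ (y₀ + ε • y) ≤ d := by
  simp only [Pi.le_def, mulVec_add, mulVec_smul, Pi.add_apply, Pi.smul_apply, smul_eq_mul]
  refine eventually_all.2 fun i => ?_
  rcases (hy₀ i).eq_or_lt with hi | hi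
  · filter_upwards [self_mem_nhdsWithin] with ε (hε : 0 < ε)
    nlinarith [hy i hi]
  · have : Tendsto (fun ε => (D *ᵥ y₀) i + ε * (D *ᵥ y) i) (𝓝[>] 0) (𝓝 ((D *ᵥ y₀) i)) := by
      exact (Continuous.tendsto' (by fun_prop) 0 _ (by simp)).mono_left nhdsWithin_le_nhds
    exact (this.eventually (gt_mem_nhds hi)).mono fun _ => le_of_lt

theorem exists_dual_optimal_of_isMinOn {y₀ : κ → ℝ} (hy₀ : D *ᵥ y₀ ≤ d)
    (hmin : IsMinOn (c ⬝ᵥ ·) {y | D *ᵥ y ≤ d} y₀) :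
    ∃ v, 0 ≤ v ∧ -(Dᵀ *ᵥ v) = c ∧ -(d ⬝ᵥ v) = c ⬝ᵥ y₀ := by
  -- KKT: `c` is a nonnegative combination of the negated active rows of `D`
  obtain ⟨v, hv, hvs, hvc⟩ := exists_nonneg_of_forall_dotProduct_nonneg (fun i => -D i)
    {i | (D *ᵥ y₀) i = d i} (b := c) fun y hy => by
      have hdir := eventually_mulVec_add_smul_le hy₀ fun i hi => by
        simpa [mulVec, neg_dotProduct] using hy i hi
      obtain ⟨ε, hε, hε0⟩ := (hdir.and self_mem_nhdsWithin).exists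
      have := hmin hε
      simp only [Set.mem_ofPred_eq, dotProduct_add, dotProduct_smul, smul_eq_mul] at this
      exact nonneg_of_mul_nonneg_right (by linarith) hε0
  have hvD : -(Dᵀ *ᵥ v) = c := by
    simp [← hvc, mulVec_transpose, vecMul_eq_sum, Finset.sum_neg_distrib]
  refine ⟨v, hv, hvD, ?_⟩
  -- complementary slackness: `v` only charges the active constraints
  have hslack : d ⬝ᵥ v = (D *ᵥ y₀) ⬝ᵥ v := Finset.sum_congr rfl fun i _ => by
    by_cases hi : v i = 0
    · simp [hi]
    · rw [hvs hi]
  rw [hslack, ← hvD, neg_dotProduct, mulVec_transpose, dotProduct_comm, dotProduct_mulVec]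

theorem isGreatest_dual_of_isMinOn {y₀ : κ → ℝ} (hy₀ : D *ᵥ y₀ ≤ d)
    (hmin : IsMinOn (c ⬝ᵥ ·) {y | D *ᵥ y ≤ d} y₀) :
    IsGreatest ((fun v => -(d ⬝ᵥ v)) '' {v | 0 ≤ v ∧ -(Dᵀ *ᵥ v) = c}) (c ⬝ᵥ y₀) := by
  obtain ⟨v, hv, hvc, hval⟩ := exists_dual_optimal_of_isMinOn hy₀ hmin
  refine ⟨⟨v, ⟨hv, hvc⟩, hval⟩, ?_⟩
  rintro _ ⟨v, ⟨hv, hvc⟩, rfl⟩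
  exact neg_dotProduct_le_of_dual_feasible hv hvc hy₀

end Matrix

theorem stmt_2_general
    (n m p : ℕ)
    (C : Matrix (Fin n) (Fin m) ℝ)
    (D : Matrix (Fin p) (Fin m) ℝ)
    (d : Fin p → ℝ) (g : Fin n → ℝ) (e : Fin m → ℝ)
    (z : (Fin n → ℝ) → (Fin m → ℝ) → ℝ)
    (hz : ∀ x y, z x y = x ⬝ᵥ C.mulVec y + g ⬝ᵥ x + e ⬝ᵥ y)
    (X : Set (Fin n → ℝ)) (Y : Set (Fin m → ℝ))
    (hY : Y = {y | D.mulVec y ≤ d})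
    (hYbd : Bornology.IsBounded Y)
    (V : (Fin n → ℝ) → Set (Fin p → ℝ))
    (hV : ∀ x, V x = {v | 0 ≤ v ∧ -(Dᵀ.mulVec v) = Cᵀ.mulVec x + e}) :
    ∀ xs ∈ X, ∀ ys ∈ Y, IsLeast (Set.image2 z X Y) (z xs ys) →
      IsLeast {w : ℝ | ∃ x ∈ X, IsGreatest ((fun v => g ⬝ᵥ x - d ⬝ᵥ v) '' V x) w} (z xs ys) ∧
      IsGreatest ((fun v => g ⬝ᵥ xs - d ⬝ᵥ v) '' V xs) (z xs ys) := by
  subst hY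
  intro xs hxs ys hys hleast
  have hzc (x y) : z x y = g ⬝ᵥ x + (Cᵀ *ᵥ x + e) ⬝ᵥ y := by
    rw [hz, add_dotProduct, mulVec_transpose, ← dotProduct_mulVec]
    ring
  have hdual (x y) (hy : D *ᵥ y ≤ d) (hmin : IsMinOn ((Cᵀ *ᵥ x + e) ⬝ᵥ ·) {y | D *ᵥ y ≤ d} y) :
      IsGreatest ((fun v => g ⬝ᵥ x - d ⬝ᵥ v) '' V x) (z x y) := by
    rw [hV, hzc]
    simpa [Set.image_image, sub_eq_add_neg] using
      (monotone_id.const_add (g ⬝ᵥ x)).map_isGreatest (isGreatest_dual_of_isMinOn hy hmin)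
  have hys_min : IsMinOn ((Cᵀ *ᵥ xs + e) ⬝ᵥ ·) {y | D *ᵥ y ≤ d} ys := fun y hy => by
    simpa [hzc] using hleast.2 (Set.mem_image2_of_mem hxs hy)
  refine ⟨⟨⟨xs, hxs, hdual xs ys hys hys_min⟩, ?_⟩, hdual xs ys hys hys_min⟩
  rintro w ⟨x, hx, hw⟩
  obtain ⟨y, hy, hmin⟩ := (Metric.isCompact_of_isClosed_isBounded (isClosed_setOf_mulVec_le D d)
    hYbd).exists_isMinOn ⟨ys, hys⟩ (continuous_const.dotProduct continuous_id).continuousOn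
  rw [hw.unique (hdual x y hy hmin)]
  exact hleast.2 (Set.mem_image2_of_mem hx hy)

/-- The dual min-max characterization for the problem with disjoint subset
`Y = {y | D y ≤ d}` (Corollary 1 of the paper). -/
theorem stmt_2
    (n m q p : ℕ) (hn : 0 < n) (hm : 0 < m) (hq : 0 < q) (hp : 0 < p)
    (C : Matrix (Fin n) (Fin m) ℝ) (A : Matrix (Fin q) (Fin n) ℝ)
    (D : Matrix (Fin p) (Fin m) ℝ)
    (a : Fin q → ℝ) (d : Fin p → ℝ) (g : Fin n → ℝ) (e : Fin m → ℝ)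
    (z : (Fin n → ℝ) → (Fin m → ℝ) → ℝ)
    (hz : ∀ x y, z x y = x ⬝ᵥ C.mulVec y + g ⬝ᵥ x + e ⬝ᵥ y)
    (X : Set (Fin n → ℝ)) (Y : Set (Fin m → ℝ))
    (hX : X = {x | A.mulVec x ≤ a ∧ 0 ≤ x})
    (hY : Y = {y | D.mulVec y ≤ d})
    (hXne : X.Nonempty) (hYne : Y.Nonempty)
    (hXbd : Bornology.IsBounded X) (hYbd : Bornology.IsBounded Y)
    (V : (Fin n → ℝ) → Set (Fin p → ℝ))
    (hV : ∀ x, V x = {v | 0 ≤ v ∧ -(Dᵀ.mulVec v) = Cᵀ.mulVec x + e}) :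
    ∀ xs ∈ X, ∀ ys ∈ Y, IsLeast (Set.image2 z X Y) (z xs ys) →
      IsLeast {w : ℝ | ∃ x ∈ X, IsGreatest ((fun v => g ⬝ᵥ x - d ⬝ᵥ v) '' V x) w} (z xs ys) ∧
      IsGreatest ((fun v => g ⬝ᵥ xs - d ⬝ᵥ v) '' V xs) (z xs ys) :=
  stmt_2_general n m p C D d g e z hz X Y hY hYbd V hV
end

section
/- Assume X and Y are nonempty and bounded, and let h ∈ ℝ. Then the system {A x ≤ a, xᵀC y + g·x + e·y < h, B y ≤ b, x ≥ 0, y ≥ 0} has no solution (x, y) if and only if for every y ∈ Y the system {−Aᵀu ≤ C y + g, a·u ≤ e·y − h, u ≥ 0} has a solution u ∈ ℝ^q. Moreover, the maximal value h* of h for which the latter consistency property holds for every y ∈ Y equals the minimum of z over X × Y. -/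
/-!
For fixed `y`, the inner problem `min_{x ∈ X} z x y` is a linear program, and since `X` is a
nonempty polytope, LP strong duality says that its value is at least `h` exactly when the dual
system in `u` is solvable. Thus the dual system is solvable for every `y ∈ Y` iff `h` is a lower
bound of `z` on `X × Y`, which gives both the alternative and the characterization of `h*`.
Strong duality is derived from Farkas' lemma, i.e. from the separation of a point from a closed
convex cone; a finitely generated cone is closed by the conic Carathéodory argument.
-/

open Matrix

section ConicHull

variable {ι E : Type*} [Fintype ι] [AddCommGroup E] [Module ℝ E]

/-- Conic Carathéodory step: along a linear relation among the generators, a nonnegative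
combination can be moved until one coefficient vanishes. -/
theorem exists_nonneg_eq_zero_linearCombination_eq_of_not_linearIndependent {v : ι → E}
    (hv : ¬LinearIndependent ℝ v) {c : ι → ℝ} (hc : 0 ≤ c) :
    ∃ c' i, 0 ≤ c' ∧ c' i = 0 ∧
      Fintype.linearCombination ℝ v c' = Fintype.linearCombination ℝ v c := by
  classical
  obtain ⟨μ, hμ, i₁, hi₁⟩ := Fintype.not_linearIndependent_iff.mp hv
  obtain ⟨μ, hμ, hneg⟩ : ∃ μ : ι → ℝ, ∑ i, μ i • v i = 0 ∧ ∃ i, μ i < 0 := by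
    rcases hi₁.lt_or_gt with hlt | hgt
    · exact ⟨μ, hμ, i₁, hlt⟩
    · exact ⟨-μ, by simp [neg_smul, hμ], i₁, by simpa using hgt⟩
  obtain ⟨i₀, hi₀, hmin⟩ := Finset.exists_min_image {i | μ i < 0} (fun i => c i / -μ i)
    (by simpa [Finset.Nonempty] using hneg)
  rw [Finset.mem_filter_univ] at hi₀
  set t := c i₀ / -μ i₀
  refine ⟨c + t • μ, i₀, fun i => ?_, ?_, ?_⟩
  · have ht : 0 ≤ t := div_nonneg (hc i₀) (by linarith)
    rcases le_or_gt 0 (μ i) with hμi | hμi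
    · simpa using add_nonneg (hc i) (mul_nonneg ht hμi)
    · have := hmin i (by simpa using hμi)
      rw [le_div_iff₀ (by linarith)] at this
      simp only [Pi.add_apply, Pi.smul_apply, smul_eq_mul, Pi.zero_apply]
      linarith
  · have : μ i₀ ≠ 0 := hi₀.ne
    simp only [Pi.add_apply, Pi.smul_apply, smul_eq_mul, t]
    field_simp
    ring
  · simp [Fintype.linearCombination_apply, add_smul, Finset.sum_add_distrib, ← smul_smul,
      ← Finset.smul_sum, hμ]

theorem Fintype.linearCombination_insertNth_zero {k : ℕ} (v : Fin (k + 1) → E) (i : Fin (k + 1))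
    (c : Fin k → ℝ) :
    Fintype.linearCombination ℝ v (i.insertNth 0 c) =
      Fintype.linearCombination ℝ (v ∘ i.succAbove) c := by
  simp [Fintype.linearCombination_apply, Fin.sum_univ_succAbove _ i]

variable [TopologicalSpace E] [IsTopologicalAddGroup E] [ContinuousSMul ℝ E] [T2Space E]

theorem LinearIndependent.isClosed_linearCombination_image_Ici {v : ι → E}
    (hv : LinearIndependent ℝ v) :
    IsClosed (Fintype.linearCombination ℝ v '' Set.Ici 0) :=
  (LinearMap.isClosedEmbedding_of_injective
    (LinearMap.ker_eq_bot.mpr hv.fintypeLinearCombination_injective)).isClosedMap _ isClosed_Ici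

theorem isClosed_linearCombination_image_Ici_fin :
    ∀ (k : ℕ) (v : Fin k → E), IsClosed (Fintype.linearCombination ℝ v '' Set.Ici 0)
  | 0, _ => (Set.subsingleton_of_subsingleton.image _).isClosed
  | k + 1, v => by
    by_cases hv : LinearIndependent ℝ v
    · exact hv.isClosed_linearCombination_image_Ici
    suffices Fintype.linearCombination ℝ v '' Set.Ici 0 =
        ⋃ i : Fin (k + 1), Fintype.linearCombination ℝ (v ∘ i.succAbove) '' Set.Ici 0 by
      rw [this]
      exact isClosed_iUnion_of_finite fun i => isClosed_linearCombination_image_Ici_fin k _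
    ext x
    simp only [Set.mem_image, Set.mem_iUnion, Set.mem_Ici]
    constructor
    · rintro ⟨c, hc, rfl⟩
      obtain ⟨c', i, hc', hc'i, hc'c⟩ :=
        exists_nonneg_eq_zero_linearCombination_eq_of_not_linearIndependent hv hc
      refine ⟨i, i.removeNth c', fun j => hc' _, ?_⟩
      rw [← hc'c, ← Fintype.linearCombination_insertNth_zero, ← hc'i,
        Fin.insertNth_self_removeNth]
    · rintro ⟨i, c, hc, rfl⟩
      refine ⟨i.insertNth 0 c, fun j => ?_, Fintype.linearCombination_insertNth_zero v i c⟩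
      induction j using i.succAboveCases with
      | x => simp
      | p j => simpa using hc j

theorem isClosed_linearCombination_image_Ici (v : ι → E) :
    IsClosed (Fintype.linearCombination ℝ v '' Set.Ici 0) := by
  let e := Fintype.equivFin ι
  convert isClosed_linearCombination_image_Ici_fin _ (v ∘ e.symm) using 1
  ext x
  constructor
  · rintro ⟨c, hc, rfl⟩
    exact ⟨c ∘ e.symm, fun i => hc _, by
      simp [Fintype.linearCombination_apply, e.symm.sum_comp (fun i => c i • v i)]⟩
  · rintro ⟨c, hc, rfl⟩
    exact ⟨c ∘ e, fun i => hc _, by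
      simp [Fintype.linearCombination_apply, ← e.symm.sum_comp]⟩

end ConicHull

theorem mem_linearCombination_image_Ici_of_forall_dotProduct_nonneg {ι p : Type*} [Fintype ι]
    [Fintype p] (v : ι → p → ℝ) {d : p → ℝ} (h : ∀ y, (∀ i, 0 ≤ y ⬝ᵥ v i) → 0 ≤ y ⬝ᵥ d) :
    d ∈ Fintype.linearCombination ℝ v '' Set.Ici 0 := by
  classical
  by_contra hd
  let K : ProperCone ℝ (p → ℝ) :=
    ⟨(PointedCone.positive ℝ (ι → ℝ)).map (Fintype.linearCombination ℝ v),
      isClosed_linearCombination_image_Ici v⟩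
  obtain ⟨f, hfK, hfd⟩ := K.hyperplane_separation_point hd
  let y : p → ℝ := fun j => f fun k => if j = k then 1 else 0
  have hf (x : p → ℝ) : f x = y ⬝ᵥ x := by
    rw [dotProduct_comm]
    exact LinearMap.pi_apply_eq_sum_univ (f : (p → ℝ) →ₗ[ℝ] ℝ) x
  have hv (i : ι) : v i ∈ K :=
    ⟨Pi.single i 1, by simp [Pi.single_nonneg], by simp [Fintype.linearCombination_apply_single]⟩
  exact hfd.not_ge (hf d ▸ h y fun i => hf (v i) ▸ hfK _ (hv i))

theorem Matrix.exists_nonneg_mulVec_le_of_forall_nonneg {p r : Type*} [Fintype p] [Fintype r]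
    (M : Matrix p r ℝ) {d : p → ℝ} (h : ∀ y, 0 ≤ y → 0 ≤ y ᵥ* M → 0 ≤ y ⬝ᵥ d) :
    ∃ w, 0 ≤ w ∧ M *ᵥ w ≤ d := by
  classical
  -- `M w ≤ d` means `M w + s = d` for a slack `s ≥ 0`, whose columns are the unit vectors
  let v : r ⊕ p → p → ℝ := Sum.elim (fun j => Mᵀ j) fun i => Pi.single i 1
  have hv (w : r ⊕ p → ℝ) :
      Fintype.linearCombination ℝ v w = M *ᵥ (w ∘ Sum.inl) + w ∘ Sum.inr := by
    ext i
    simp [v, Fintype.linearCombination_apply, Fintype.sum_sum_type, mulVec, dotProduct,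
      Pi.single_apply, mul_comm]
  obtain ⟨w, hw, hwd⟩ := mem_linearCombination_image_Ici_of_forall_dotProduct_nonneg v (d := d)
    fun y hy => h y (fun i => by simpa [v] using hy (Sum.inr i)) fun j => hy (Sum.inl j)
  rw [hv] at hwd
  exact ⟨w ∘ Sum.inl, fun j => hw (Sum.inl j),
    hwd ▸ le_add_of_nonneg_right fun i => hw (Sum.inr i)⟩

theorem Bornology.IsBounded.eq_zero_of_forall_add_smul_mem {E : Type*} [NormedAddCommGroup E]
    [NormedSpace ℝ E] {s : Set E} (hs : IsBounded s) {x₀ v : E}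
    (h : ∀ t : ℝ, 0 ≤ t → x₀ + t • v ∈ s) : v = 0 := by
  obtain ⟨R, hR⟩ := hs.exists_norm_le
  by_contra hv
  have hR₀ : ‖x₀‖ ≤ R := by simpa using hR _ (h 0 le_rfl)
  set t := (R + ‖x₀‖ + 1) / ‖v‖
  have ht : 0 ≤ t := div_nonneg (by linarith [norm_nonneg x₀]) (norm_nonneg v)
  have htv : ‖t • v‖ = R + ‖x₀‖ + 1 := by
    rw [norm_smul, Real.norm_of_nonneg ht, div_mul_cancel₀ _ (norm_ne_zero_iff.mpr hv)]
  have := norm_sub_le (x₀ + t • v) x₀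
  rw [add_sub_cancel_left] at this
  linarith [hR _ (h t ht)]

variable {q n : Type*} [Fintype q] [Fintype n]

theorem Matrix.exists_dual_feasible_of_homogeneous_bound (A : Matrix q n ℝ) (a : q → ℝ)
    (c : n → ℝ) (β : ℝ)
    (h : ∀ x τ, 0 ≤ x → 0 ≤ τ → A *ᵥ x ≤ τ • a → τ * β ≤ c ⬝ᵥ x) :
    ∃ u, 0 ≤ u ∧ -(Aᵀ *ᵥ u) ≤ c ∧ a ⬝ᵥ u ≤ -β := by
  let M := fromRows (-Aᵀ) (replicateRow Unit a)
  have hM : ∀ y, 0 ≤ y → 0 ≤ y ᵥ* M → 0 ≤ y ⬝ᵥ Sum.elim c fun _ => -β := by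
    intro y hy hyM
    have hyM' : A *ᵥ (y ∘ Sum.inl) ≤ y (Sum.inr ()) • a := by
      intro i
      simpa [M, replicateRow, vecMul, dotProduct, mulVec, mul_comm] using hyM i
    have hbound := h (y ∘ Sum.inl) (y (Sum.inr ())) (fun j => hy _) (hy _) hyM'
    rw [← Sum.elim_comp_inl_inr y, sumElim_dotProduct_sumElim]
    simp [dotProduct, mul_comm] at hbound ⊢
    linarith
  obtain ⟨u, hu, hMu⟩ := M.exists_nonneg_mulVec_le_of_forall_nonneg hM
  rw [fromRows_mulVec, Sum.elim_le_elim_iff] at hMu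
  refine ⟨u, hu, by simpa [neg_mulVec] using hMu.1, ?_⟩
  simpa [replicateRow, mulVec, dotProduct, mul_comm] using hMu.2 ()

theorem Matrix.exists_dual_feasible_of_forall_le (A : Matrix q n ℝ) (a : q → ℝ) (c : n → ℝ)
    (β : ℝ) (hne : {x | A *ᵥ x ≤ a ∧ 0 ≤ x}.Nonempty)
    (hbd : Bornology.IsBounded {x | A *ᵥ x ≤ a ∧ 0 ≤ x})
    (h : ∀ x, A *ᵥ x ≤ a → 0 ≤ x → β ≤ c ⬝ᵥ x) :
    ∃ u, 0 ≤ u ∧ -(Aᵀ *ᵥ u) ≤ c ∧ a ⬝ᵥ u ≤ -β := by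
  refine A.exists_dual_feasible_of_homogeneous_bound a c β fun x τ hx hτ hAx => ?_
  obtain rfl | hτ := hτ.eq_or_lt
  · -- `x` is a recession direction of the bounded polytope
    obtain ⟨x₀, hAx₀, hx₀⟩ := hne
    obtain rfl : x = 0 := hbd.eq_zero_of_forall_add_smul_mem fun t ht =>
      ⟨by simpa [mulVec_add, mulVec_smul] using
          add_le_add hAx₀ (smul_nonpos_of_nonneg_of_nonpos ht (by simpa using hAx)),
        add_nonneg hx₀ (smul_nonneg ht hx)⟩
    simp
  · have hτ' : 0 ≤ τ⁻¹ := inv_nonneg.mpr hτ.le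
    have := h (τ⁻¹ • x)
      (by simpa [mulVec_smul, hτ.ne'] using smul_le_smul_of_nonneg_left hAx hτ')
      (smul_nonneg hτ' hx)
    rw [dotProduct_smul, smul_eq_mul, le_inv_mul_iff₀ hτ] at this
    linarith

theorem Matrix.neg_dotProduct_le_of_dual_feasible_s6 {A : Matrix q n ℝ} {a : q → ℝ} {c : n → ℝ}
    {u : q → ℝ} {x : n → ℝ} (hu : 0 ≤ u) (hAu : -(Aᵀ *ᵥ u) ≤ c) (hx : 0 ≤ x)
    (hAx : A *ᵥ x ≤ a) : -(a ⬝ᵥ u) ≤ c ⬝ᵥ x :=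
  calc -(a ⬝ᵥ u) = -(u ⬝ᵥ a) := by rw [dotProduct_comm]
    _ ≤ -(u ⬝ᵥ A *ᵥ x) := neg_le_neg (dotProduct_le_dotProduct_of_nonneg_left hAx hu)
    _ = -(Aᵀ *ᵥ u) ⬝ᵥ x := by rw [neg_dotProduct, dotProduct_mulVec, mulVec_transpose]
    _ ≤ c ⬝ᵥ x := dotProduct_le_dotProduct_of_nonneg_right hAu hx

theorem Matrix.forall_le_add_iff_exists_dual_feasible (A : Matrix q n ℝ) (a : q → ℝ)
    (c : n → ℝ) (γ β : ℝ) (hne : {x | A *ᵥ x ≤ a ∧ 0 ≤ x}.Nonempty)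
    (hbd : Bornology.IsBounded {x | A *ᵥ x ≤ a ∧ 0 ≤ x}) :
    (∀ x, A *ᵥ x ≤ a → 0 ≤ x → β ≤ c ⬝ᵥ x + γ) ↔
      ∃ u, -(Aᵀ *ᵥ u) ≤ c ∧ a ⬝ᵥ u ≤ γ - β ∧ 0 ≤ u := by
  constructor
  · intro h
    obtain ⟨u, hu, hAu, hau⟩ := A.exists_dual_feasible_of_forall_le a c (β - γ) hne hbd
      fun x hAx hx => by linarith [h x hAx hx]
    exact ⟨u, hAu, by linarith, hu⟩
  · rintro ⟨u, hAu, hau, hu⟩ x hAx hx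
    linarith [neg_dotProduct_le_of_dual_feasible_s6 hu hAu hx hAx]

theorem stmt_6_general
    (n m q l : ℕ)
    (C : Matrix (Fin n) (Fin m) ℝ) (A : Matrix (Fin q) (Fin n) ℝ)
    (B : Matrix (Fin l) (Fin m) ℝ)
    (a : Fin q → ℝ) (b : Fin l → ℝ) (g : Fin n → ℝ) (e : Fin m → ℝ)
    (z : (Fin n → ℝ) → (Fin m → ℝ) → ℝ)
    (hz : ∀ x y, z x y = x ⬝ᵥ C.mulVec y + g ⬝ᵥ x + e ⬝ᵥ y)
    (X : Set (Fin n → ℝ)) (Y : Set (Fin m → ℝ))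
    (hX : X = {x | A.mulVec x ≤ a ∧ 0 ≤ x})
    (hY : Y = {y | B.mulVec y ≤ b ∧ 0 ≤ y})
    (hXne : X.Nonempty)
    (hXbd : Bornology.IsBounded X)
    (h : ℝ) :
    ((¬ ∃ (x : Fin n → ℝ) (y : Fin m → ℝ),
        A.mulVec x ≤ a ∧ x ⬝ᵥ C.mulVec y + g ⬝ᵥ x + e ⬝ᵥ y < h ∧
        B.mulVec y ≤ b ∧ 0 ≤ x ∧ 0 ≤ y) ↔
      (∀ y ∈ Y, ∃ u : Fin q → ℝ,
        -(Aᵀ.mulVec u) ≤ C.mulVec y + g ∧ a ⬝ᵥ u ≤ e ⬝ᵥ y - h ∧ 0 ≤ u)) ∧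
    (∀ zstar : ℝ, IsLeast (Set.image2 z X Y) zstar →
      IsGreatest {h' : ℝ | ∀ y ∈ Y, ∃ u : Fin q → ℝ,
        -(Aᵀ.mulVec u) ≤ C.mulVec y + g ∧ a ⬝ᵥ u ≤ e ⬝ᵥ y - h' ∧ 0 ≤ u} zstar) := by
  subst hX hY
  have hdual (h' : ℝ) : (∀ y ∈ {y | B *ᵥ y ≤ b ∧ 0 ≤ y}, ∃ u : Fin q → ℝ,
        -(Aᵀ *ᵥ u) ≤ C *ᵥ y + g ∧ a ⬝ᵥ u ≤ e ⬝ᵥ y - h' ∧ 0 ≤ u) ↔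
      ∀ y ∈ {y | B *ᵥ y ≤ b ∧ 0 ≤ y}, ∀ x ∈ {x | A *ᵥ x ≤ a ∧ 0 ≤ x}, h' ≤ z x y := by
    refine forall₂_congr fun y _ => ?_
    rw [← A.forall_le_add_iff_exists_dual_feasible a _ _ _ hXne hXbd]
    simp only [Set.mem_ofPred_eq, and_imp, hz, add_dotProduct, dotProduct_comm (C *ᵥ y)]
  refine ⟨?_, fun zstar hzstar => ⟨(hdual zstar).2 fun y hy x hx =>
    hzstar.2 (Set.mem_image2_of_mem hx hy), fun h' hh' => ?_⟩⟩
  · rw [hdual]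
    simp only [Set.mem_ofPred_eq, and_imp, hz, not_exists, not_and]
    grind
  · obtain ⟨x, hx, y, hy, rfl⟩ := hzstar.1
    exact (hdual h').1 hh' y hy x hx

/-- Theorem 3 (first part) of the paper: inconsistency of the strict bilinear
system is equivalent to consistency of the dual system for every `y ∈ Y`; the maximal such
`h` is the optimal value of the disjoint bilinear programming problem. -/
theorem stmt_6
    (n m q l : ℕ) (hn : 0 < n) (hm : 0 < m) (hq : 0 < q) (hl : 0 < l)
    (C : Matrix (Fin n) (Fin m) ℝ) (A : Matrix (Fin q) (Fin n) ℝ)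
    (B : Matrix (Fin l) (Fin m) ℝ)
    (a : Fin q → ℝ) (b : Fin l → ℝ) (g : Fin n → ℝ) (e : Fin m → ℝ)
    (z : (Fin n → ℝ) → (Fin m → ℝ) → ℝ)
    (hz : ∀ x y, z x y = x ⬝ᵥ C.mulVec y + g ⬝ᵥ x + e ⬝ᵥ y)
    (X : Set (Fin n → ℝ)) (Y : Set (Fin m → ℝ))
    (hX : X = {x | A.mulVec x ≤ a ∧ 0 ≤ x})
    (hY : Y = {y | B.mulVec y ≤ b ∧ 0 ≤ y})
    (hXne : X.Nonempty) (hYne : Y.Nonempty)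
    (hXbd : Bornology.IsBounded X) (hYbd : Bornology.IsBounded Y)
    (h : ℝ) :
    ((¬ ∃ (x : Fin n → ℝ) (y : Fin m → ℝ),
        A.mulVec x ≤ a ∧ x ⬝ᵥ C.mulVec y + g ⬝ᵥ x + e ⬝ᵥ y < h ∧
        B.mulVec y ≤ b ∧ 0 ≤ x ∧ 0 ≤ y) ↔
      (∀ y ∈ Y, ∃ u : Fin q → ℝ,
        -(Aᵀ.mulVec u) ≤ C.mulVec y + g ∧ a ⬝ᵥ u ≤ e ⬝ᵥ y - h ∧ 0 ≤ u)) ∧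
    (∀ zstar : ℝ, IsLeast (Set.image2 z X Y) zstar →
      IsGreatest {h' : ℝ | ∀ y ∈ Y, ∃ u : Fin q → ℝ,
        -(Aᵀ.mulVec u) ≤ C.mulVec y + g ∧ a ⬝ᵥ u ≤ e ⬝ᵥ y - h' ∧ 0 ≤ u} zstar) :=
  stmt_6_general n m q l C A B a b g e z hz X Y hX hY hXne hXbd h
end

section
/- Assume X = {x ∈ ℝ^n : A x ≤ a, x ≥ 0} is nonempty and bounded. Then the linear program: maximize h over (u, y, h) subject to {−Aᵀu − C y ≤ g, a·u − e·y ≤ −h, u ≥ 0} has a (finite) optimal solution if and only if the system {A x ≤ a, Cᵀx = −e, x ≥ 0} has a solution; if this system has no solution, then the objective h is unbounded above on the feasible set of the linear program. -/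
/-!
Write the linear program as: maximize `c ⬝ᵥ x + d ⬝ᵥ z` subject to `0 ≤ x`, `M x + N z ≤ b`, with
`M = -Aᵀ`, `N = -C`, `b = g`, `c = -a`, `d = e`. Its dual feasible set
`{y | 0 ≤ y, c ≤ y M, y N = d}` is then exactly the system `{A x ≤ a, Cᵀ x = -e, x ≥ 0}`.

The program is feasible: otherwise Farkas' lemma gives `v ≥ 0` with `A v ≤ 0` and `g ⬝ᵥ v < 0`, so
`v ≠ 0` is a recession direction of the nonempty bounded polyhedron `X`. Duality then finishes:
if the dual is infeasible, Farkas' lemma gives an improving ray, along which the objective is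
unbounded; if it is feasible, weak duality bounds the objective and Farkas' lemma, applied to the
constraints together with `objective ≥ sup`, shows that the supremum is attained.

Farkas' lemma comes from separating a point from the cone `M '' {x | 0 ≤ x}`, which is closed:
when the columns of `M` are dependent, moving along a kernel vector until a coordinate vanishes
writes the cone as a finite union of cones with one column fewer.
-/

open Matrix

theorem Sum.elim_nonneg_iff {α β γ : Type*} [Zero γ] [LE γ] {u : α → γ} {v : β → γ} :
    0 ≤ Sum.elim u v ↔ 0 ≤ u ∧ 0 ≤ v := by
  rw [← Sum.elim_zero_zero, Sum.elim_le_elim_iff]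

theorem Matrix.vecMul_replicateRow {ι κ α : Type*} [Fintype ι] [NonUnitalNonAssocSemiring α]
    (w : ι → α) (v : κ → α) : w ᵥ* replicateRow ι v = (∑ i, w i) • v := by
  ext j
  simp [vecMul, dotProduct, Finset.sum_mul]

theorem Matrix.mulVec_eq_add_mulVec_submatrix_succAbove {ι R : Type*} [CommSemiring R] {k : ℕ}
    (M : Matrix ι (Fin (k + 1)) R) (x : Fin (k + 1) → R) (i : Fin (k + 1)) :
    M *ᵥ x = x i • M.col i + M.submatrix id i.succAbove *ᵥ (x ∘ i.succAbove) := by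
  ext r
  simp [mulVec, dotProduct, Fin.sum_univ_succAbove _ i, mul_comm]

theorem exists_nonneg_add_smul_apply_eq_zero {κ : Type*} [Fintype κ] {x d : κ → ℝ} (hx : 0 ≤ x)
    {i₀ : κ} (hi₀ : d i₀ < 0) : ∃ t : ℝ, 0 ≤ t ∧ 0 ≤ x + t • d ∧ ∃ i, (x + t • d) i = 0 := by
  classical
  obtain ⟨i, hi, hmin⟩ := (Finset.univ.filter (d · < 0)).exists_min_image (fun j => x j / -d j)
    ⟨i₀, by simpa using hi₀⟩
  simp only [Finset.mem_filter, Finset.mem_univ, true_and] at hi hmin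
  have ht : 0 ≤ x i / -d i := div_nonneg (hx i) (by linarith)
  refine ⟨x i / -d i, ht, fun j => ?_, i, ?_⟩
  · simp only [Pi.zero_apply, Pi.add_apply, Pi.smul_apply, smul_eq_mul]
    rcases lt_or_ge (d j) 0 with hj | hj
    · linarith [(le_div_iff₀ (neg_pos.2 hj)).1 (hmin j hj)]
    · have hxj : 0 ≤ x j := hx j
      linarith [mul_nonneg ht hj]
  · simp only [Pi.add_apply, Pi.smul_apply, smul_eq_mul]
    rw [div_mul_eq_mul_div, div_neg, mul_div_assoc, div_self hi.ne]
    ring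

section Cone

variable {ι κ : Type*} [Fintype κ]

theorem Matrix.mulVec_image_Ici_eq_iUnion {k : ℕ} (M : Matrix ι (Fin (k + 1)) ℝ)
    {d : Fin (k + 1) → ℝ} (hd : M *ᵥ d = 0) {i₀ : Fin (k + 1)} (hi₀ : d i₀ < 0) :
    (M *ᵥ ·) '' Set.Ici 0 = ⋃ i : Fin (k + 1), (M.submatrix id i.succAbove *ᵥ ·) '' Set.Ici 0 := by
  ext v
  simp only [Set.mem_image, Set.mem_Ici, Set.mem_iUnion]
  constructor
  · rintro ⟨x, hx, rfl⟩
    obtain ⟨t, -, hxt, i, hi⟩ := exists_nonneg_add_smul_apply_eq_zero hx hi₀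
    refine ⟨i, (x + t • d) ∘ i.succAbove, fun j => hxt _, ?_⟩
    calc M.submatrix id i.succAbove *ᵥ ((x + t • d) ∘ i.succAbove)
        = (x + t • d) i • M.col i + M.submatrix id i.succAbove *ᵥ ((x + t • d) ∘ i.succAbove) := by
          rw [hi, zero_smul, zero_add]
      _ = M *ᵥ x := by
          rw [← mulVec_eq_add_mulVec_submatrix_succAbove, mulVec_add, mulVec_smul, hd, smul_zero,
            add_zero]
  · rintro ⟨i, x, hx, rfl⟩
    refine ⟨i.insertNth 0 x, fun j => ?_, ?_⟩
    · induction j using i.succAboveCases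
      · simp
      · simpa using hx _
    · rw [mulVec_eq_add_mulVec_submatrix_succAbove _ _ i]
      simp

theorem Matrix.isClosed_mulVec_image_Ici_of_injective {M : Matrix ι κ ℝ}
    (hM : Function.Injective (M *ᵥ ·)) : IsClosed ((M *ᵥ ·) '' Set.Ici 0) :=
  (LinearMap.isClosedEmbedding_of_injective (f := M.mulVecLin)
    (LinearMap.ker_eq_bot.2 hM)).isClosedMap _ isClosed_Ici

theorem Matrix.isClosed_mulVec_image_Ici_fin : ∀ {k : ℕ} (M : Matrix ι (Fin k) ℝ),
    IsClosed ((M *ᵥ ·) '' Set.Ici 0)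
  | 0, M => isClosed_mulVec_image_Ici_of_injective fun _ _ _ => Subsingleton.elim _ _
  | k + 1, M => by
    by_cases hM : Function.Injective (M *ᵥ ·)
    · exact isClosed_mulVec_image_Ici_of_injective hM
    obtain ⟨d, hd, hd0⟩ : ∃ d, M *ᵥ d = 0 ∧ d ≠ 0 := by
      have : ¬∀ v, M *ᵥ v = 0 → v = 0 := fun h =>
        hM (LinearMap.ker_eq_bot.1 (ker_mulVecLin_eq_bot_iff.2 h))
      push Not at this
      exact this
    obtain ⟨d, hd, i₀, hi₀⟩ : ∃ d, M *ᵥ d = 0 ∧ ∃ i, d i < 0 := by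
      obtain ⟨i, hi⟩ := Function.ne_iff.1 hd0
      rcases hi.lt_or_gt with hi | hi
      · exact ⟨d, hd, i, hi⟩
      · exact ⟨-d, by simp [mulVec_neg, hd], i, by simpa using hi⟩
    rw [Matrix.mulVec_image_Ici_eq_iUnion M hd hi₀]
    exact isClosed_iUnion_of_finite fun i => isClosed_mulVec_image_Ici_fin _

theorem Matrix.isClosed_mulVec_image_Ici (M : Matrix ι κ ℝ) :
    IsClosed ((M *ᵥ ·) '' Set.Ici 0) := by
  let e := Fintype.equivFin κ
  convert isClosed_mulVec_image_Ici_fin (M.submatrix id e.symm) using 1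
  ext v
  constructor
  · rintro ⟨x, hx, rfl⟩
    refine ⟨x ∘ e.symm, fun j => hx _, ?_⟩
    simp only [submatrix_mulVec_equiv, Equiv.symm_symm, Function.comp_assoc,
      Equiv.symm_comp_self, Function.comp_id]
  · rintro ⟨x, hx, rfl⟩
    exact ⟨x ∘ e, fun j => hx _, by simp [submatrix_mulVec_equiv]⟩

end Cone

section Farkas

variable {ι κ κ' : Type*} [Fintype ι] [Fintype κ] [Fintype κ']

theorem Matrix.farkas (M : Matrix ι κ ℝ) {b : ι → ℝ} (hb : b ∉ (M *ᵥ ·) '' Set.Ici 0) :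
    ∃ y, 0 ≤ y ᵥ* M ∧ y ⬝ᵥ b < 0 := by
  classical
  have hK : ((PointedCone.positive ℝ (κ → ℝ)).map M.mulVecLin : Set (ι → ℝ)) =
      (M *ᵥ ·) '' Set.Ici 0 := by
    ext; simp
  let K : ProperCone ℝ (ι → ℝ) := ⟨_, hK ▸ M.isClosed_mulVec_image_Ici⟩
  obtain ⟨f, hf, hfb⟩ := K.hyperplane_separation_point (x₀ := b) fun h => hb (by rw [← hK]; exact h)
  have hfy (v : ι → ℝ) : f v = (fun i => f (Pi.single i 1)) ⬝ᵥ v := by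
    conv_lhs => rw [pi_eq_sum_univ' v]
    simp [dotProduct, mul_comm]
  refine ⟨fun i => f (Pi.single i 1), fun j => ?_, by rwa [← hfy]⟩
  have := hf (M *ᵥ Pi.single j 1) ⟨Pi.single j 1, ?_, rfl⟩
  · rwa [hfy, dotProduct_mulVec, dotProduct_single_one] at this
  · simp [Pi.single_nonneg]

theorem Matrix.farkas_le (M : Matrix ι κ ℝ) {b : ι → ℝ} (h : ¬∃ x, 0 ≤ x ∧ M *ᵥ x ≤ b) :
    ∃ y, 0 ≤ y ∧ 0 ≤ y ᵥ* M ∧ y ⬝ᵥ b < 0 := by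
  classical
  obtain ⟨y, hy, hyb⟩ := (fromCols M (1 : Matrix ι ι ℝ)).farkas (b := b) <| by
    rintro ⟨w, hw, hwb⟩
    have hs : 0 ≤ w ∘ .inr := fun i => hw (.inr i)
    refine h ⟨w ∘ .inl, fun i => hw _, ?_⟩
    rw [← hwb]
    simp only [fromCols_mulVec, one_mulVec]
    exact le_add_of_nonneg_right hs
  simp only [vecMul_fromCols, vecMul_one, Sum.elim_nonneg_iff] at hy
  exact ⟨y, hy.2, hy.1, hyb⟩

theorem Matrix.farkas_mixed (M : Matrix ι κ ℝ) (N : Matrix ι κ' ℝ) {b : ι → ℝ}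
    (h : ¬∃ x z, 0 ≤ x ∧ M *ᵥ x + N *ᵥ z ≤ b) :
    ∃ y, 0 ≤ y ∧ 0 ≤ y ᵥ* M ∧ y ᵥ* N = 0 ∧ y ⬝ᵥ b < 0 := by
  obtain ⟨y, hy, hyM, hyb⟩ := (fromCols M (fromCols N (-N))).farkas_le (b := b) <| by
    rintro ⟨w, hw, hwb⟩
    refine h ⟨w ∘ .inl, (w ∘ .inr) ∘ .inl - (w ∘ .inr) ∘ .inr, fun i => hw _, ?_⟩
    simpa only [fromCols_mulVec, neg_mulVec, mulVec_sub, ← sub_eq_add_neg] using hwb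
  simp only [vecMul_fromCols, vecMul_neg, Sum.elim_nonneg_iff, neg_nonneg] at hyM
  exact ⟨y, hy, hyM.1, le_antisymm hyM.2.2 hyM.2.1, hyb⟩

end Farkas

section Duality

variable {ι κ κ' : Type*} [Fintype ι] [Fintype κ] [Fintype κ']
  {M : Matrix ι κ ℝ} {N : Matrix ι κ' ℝ} {b : ι → ℝ} {c : κ → ℝ} {d : κ' → ℝ}

theorem Matrix.smul_dotProduct_add_le {x : κ → ℝ} {z : κ' → ℝ} {y : ι → ℝ} {μ : ℝ} (hx : 0 ≤ x)
    (hxz : M *ᵥ x + N *ᵥ z ≤ b) (hy : 0 ≤ y) (hyM : μ • c ≤ y ᵥ* M) (hyN : y ᵥ* N = μ • d) :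
    μ * (c ⬝ᵥ x + d ⬝ᵥ z) ≤ y ⬝ᵥ b :=
  calc μ * (c ⬝ᵥ x + d ⬝ᵥ z) = (μ • c) ⬝ᵥ x + (y ᵥ* N) ⬝ᵥ z := by
        rw [hyN, smul_dotProduct, smul_dotProduct, smul_eq_mul, smul_eq_mul, mul_add]
    _ ≤ (y ᵥ* M) ⬝ᵥ x + (y ᵥ* N) ⬝ᵥ z := by
        gcongr; exact dotProduct_le_dotProduct_of_nonneg_right hyM hx
    _ = y ⬝ᵥ (M *ᵥ x + N *ᵥ z) := by rw [dotProduct_add, dotProduct_mulVec, dotProduct_mulVec]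
    _ ≤ y ⬝ᵥ b := dotProduct_le_dotProduct_of_nonneg_left hxz hy

theorem Matrix.exists_dual_lt_of_not_exists_ge {s : ℝ}
    (h : ¬∃ x z, 0 ≤ x ∧ M *ᵥ x + N *ᵥ z ≤ b ∧ s ≤ c ⬝ᵥ x + d ⬝ᵥ z) :
    ∃ y μ, 0 ≤ y ∧ 0 ≤ μ ∧ μ • c ≤ y ᵥ* M ∧ y ᵥ* N = μ • d ∧ y ⬝ᵥ b < μ * s := by
  obtain ⟨Y, hY, hYM, hYN, hYb⟩ := farkas_mixed (fromRows M (replicateRow Unit (-c)))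
    (fromRows N (replicateRow Unit (-d))) (b := Sum.elim b fun _ => -s) <| by
    rintro ⟨x, z, hx, hxz⟩
    simp only [fromRows_mulVec, replicateRow_mulVec_eq_const, ← Sum.elim_add_add,
      Sum.elim_le_elim_iff] at hxz
    refine h ⟨x, z, hx, hxz.1, ?_⟩
    have := hxz.2 ()
    simp only [Pi.add_apply, Function.const_apply, neg_dotProduct] at this
    linarith
  simp only [vecMul_fromRows, vecMul_replicateRow, Fintype.sum_unique, smul_neg,
    ← sub_eq_add_neg, sub_nonneg, sub_eq_zero] at hYM hYN
  rw [← Sum.elim_comp_inl_inr Y, sumElim_dotProduct_sumElim] at hYb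
  exact ⟨Y ∘ .inl, Y (.inr ()), fun i => hY _, hY _, hYM, hYN, by simpa [dotProduct] using hYb⟩

theorem Matrix.exists_maximizer_of_exists_dual (hP : ∃ x z, 0 ≤ x ∧ M *ᵥ x + N *ᵥ z ≤ b)
    (hD : ∃ y, 0 ≤ y ∧ c ≤ y ᵥ* M ∧ y ᵥ* N = d) :
    ∃ x z, (0 ≤ x ∧ M *ᵥ x + N *ᵥ z ≤ b) ∧
      ∀ x' z', 0 ≤ x' → M *ᵥ x' + N *ᵥ z' ≤ b → c ⬝ᵥ x' + d ⬝ᵥ z' ≤ c ⬝ᵥ x + d ⬝ᵥ z := by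
  set V := {v | ∃ x z, (0 ≤ x ∧ M *ᵥ x + N *ᵥ z ≤ b) ∧ c ⬝ᵥ x + d ⬝ᵥ z = v}
  have hVne : V.Nonempty := by
    obtain ⟨x, z, hxz⟩ := hP
    exact ⟨_, x, z, hxz, rfl⟩
  have hVbdd : BddAbove V := by
    obtain ⟨y, hy, hyM, hyN⟩ := hD
    refine ⟨y ⬝ᵥ b, ?_⟩
    rintro _ ⟨x, z, ⟨hx, hxz⟩, rfl⟩
    simpa using smul_dotProduct_add_le hx hxz hy (μ := 1) (by simpa using hyM) (by simpa using hyN)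
  suffices ∃ x z, 0 ≤ x ∧ M *ᵥ x + N *ᵥ z ≤ b ∧ sSup V ≤ c ⬝ᵥ x + d ⬝ᵥ z by
    obtain ⟨x, z, hx, hxz, hs⟩ := this
    exact ⟨x, z, ⟨hx, hxz⟩, fun x' z' hx' hxz' =>
      (le_csSup hVbdd ⟨x', z', ⟨hx', hxz'⟩, rfl⟩).trans hs⟩
  by_contra hno
  obtain ⟨y, μ, hy, hμ, hyM, hyN, hyb⟩ := exists_dual_lt_of_not_exists_ge hno
  have : μ * sSup V ≤ y ⬝ᵥ b := by
    rw [← smul_eq_mul, ← Real.sSup_smul_of_nonneg hμ]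
    refine csSup_le hVne.smul_set ?_
    rintro _ ⟨_, ⟨x, z, ⟨hx, hxz⟩, rfl⟩, rfl⟩
    exact smul_dotProduct_add_le hx hxz hy hyM hyN
  linarith

theorem Matrix.exists_ray_of_not_exists_dual (hD : ¬∃ y, 0 ≤ y ∧ c ≤ y ᵥ* M ∧ y ᵥ* N = d) :
    ∃ x z, 0 ≤ x ∧ M *ᵥ x + N *ᵥ z ≤ 0 ∧ 0 < c ⬝ᵥ x + d ⬝ᵥ z := by
  classical
  obtain ⟨w, hw, hwcd⟩ := (fromBlocks Mᵀ (-1 : Matrix κ κ ℝ) Nᵀ 0).farkas (b := Sum.elim c d) <| by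
    rintro ⟨v, hv, hvcd⟩
    simp only [fromBlocks_mulVec, Sum.elim_eq_iff, neg_mulVec, one_mulVec, zero_mulVec, add_zero,
      mulVec_transpose] at hvcd
    refine hD ⟨v ∘ .inl, fun i => hv _, ?_, hvcd.2⟩
    rw [← hvcd.1]
    exact sub_le_self _ fun i => hv (.inr i)
  simp only [vecMul_fromBlocks, vecMul_neg, vecMul_one, vecMul_zero, add_zero, vecMul_transpose,
    Sum.elim_nonneg_iff, neg_nonneg] at hw
  rw [← Sum.elim_comp_inl_inr w, sumElim_dotProduct_sumElim] at hwcd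
  refine ⟨-(w ∘ .inl), -(w ∘ .inr), neg_nonneg.2 hw.2, ?_, ?_⟩
  · simpa only [mulVec_neg, ← neg_add, neg_nonpos] using hw.1
  · rw [dotProduct_neg, dotProduct_neg, dotProduct_comm c, dotProduct_comm d]
    linarith

theorem Matrix.exists_lt_of_not_exists_dual (hP : ∃ x z, 0 ≤ x ∧ M *ᵥ x + N *ᵥ z ≤ b)
    (hD : ¬∃ y, 0 ≤ y ∧ c ≤ y ᵥ* M ∧ y ᵥ* N = d) (K : ℝ) :
    ∃ x z, (0 ≤ x ∧ M *ᵥ x + N *ᵥ z ≤ b) ∧ K < c ⬝ᵥ x + d ⬝ᵥ z := by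
  obtain ⟨x₀, z₀, hx₀, hxz₀⟩ := hP
  obtain ⟨x, z, hx, hxz, hδ⟩ := exists_ray_of_not_exists_dual hD
  set t := |K - (c ⬝ᵥ x₀ + d ⬝ᵥ z₀)| / (c ⬝ᵥ x + d ⬝ᵥ z) + 1
  have ht : 0 ≤ t := by positivity
  refine ⟨x₀ + t • x, z₀ + t • z, ⟨add_nonneg hx₀ (smul_nonneg ht hx), ?_⟩, ?_⟩
  · calc M *ᵥ (x₀ + t • x) + N *ᵥ (z₀ + t • z)
        = (M *ᵥ x₀ + N *ᵥ z₀) + t • (M *ᵥ x + N *ᵥ z) := by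
          simp only [mulVec_add, mulVec_smul, smul_add]; abel
      _ ≤ b := add_le_of_le_of_nonpos hxz₀ (smul_nonpos_of_nonneg_of_nonpos ht hxz)
  · have : c ⬝ᵥ (x₀ + t • x) + d ⬝ᵥ (z₀ + t • z)
        = (c ⬝ᵥ x₀ + d ⬝ᵥ z₀) + t * (c ⬝ᵥ x + d ⬝ᵥ z) := by
      simp only [dotProduct_add, dotProduct_smul, smul_eq_mul]; ring
    rw [this, add_mul, div_mul_cancel₀ _ hδ.ne', one_mul]
    linarith [le_abs_self (K - (c ⬝ᵥ x₀ + d ⬝ᵥ z₀))]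

end Duality

theorem eq_zero_of_isBounded_of_add_smul_mem {E : Type*} [NormedAddCommGroup E] [NormedSpace ℝ E]
    {s : Set E} (hs : Bornology.IsBounded s) {x v : E} (h : ∀ t : ℝ, 0 ≤ t → x + t • v ∈ s) :
    v = 0 := by
  obtain ⟨R, hR⟩ := isBounded_iff_forall_norm_le.1 hs
  by_contra hv
  have hv : 0 < ‖v‖ := norm_pos_iff.2 hv
  set t := (R + ‖x‖ + 1) / ‖v‖
  have ht : 0 ≤ t :=
    div_nonneg (by linarith [hR x (by simpa using h 0 le_rfl), norm_nonneg x]) hv.le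
  have : t * ‖v‖ ≤ R + ‖x‖ :=
    calc t * ‖v‖ = ‖(x + t • v) - x‖ := by
          rw [add_sub_cancel_left, norm_smul, Real.norm_of_nonneg ht]
      _ ≤ ‖x + t • v‖ + ‖x‖ := norm_sub_le _ _
      _ ≤ R + ‖x‖ := by linarith [hR _ (h t ht)]
  rw [div_mul_cancel₀ _ hv.ne'] at this
  linarith

theorem Matrix.exists_nonneg_neg_transpose_mulVec_le {ι κ : Type*} [Fintype ι] [Fintype κ]
    {A : Matrix ι κ ℝ} {a : ι → ℝ} (hne : {x | A *ᵥ x ≤ a ∧ 0 ≤ x}.Nonempty)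
    (hbd : Bornology.IsBounded {x | A *ᵥ x ≤ a ∧ 0 ≤ x}) (g : κ → ℝ) :
    ∃ u, 0 ≤ u ∧ -Aᵀ *ᵥ u ≤ g := by
  by_contra h
  obtain ⟨v, hv, hAv, hvg⟩ := (-Aᵀ).farkas_le h
  obtain ⟨x, hAx, hx⟩ := hne
  rw [vecMul_neg, vecMul_transpose, neg_nonneg] at hAv
  have : v = 0 := eq_zero_of_isBounded_of_add_smul_mem hbd fun t ht =>
    ⟨by simpa [mulVec_add, mulVec_smul] using
        add_le_of_le_of_nonpos hAx (smul_nonpos_of_nonneg_of_nonpos ht hAv),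
      add_nonneg hx (smul_nonneg ht hv)⟩
  simp [this] at hvg

theorem stmt_10_general
    (n m q : ℕ)
    (C : Matrix (Fin n) (Fin m) ℝ) (A : Matrix (Fin q) (Fin n) ℝ)
    (a : Fin q → ℝ) (g : Fin n → ℝ) (e : Fin m → ℝ)
    (X : Set (Fin n → ℝ))
    (hX : X = {x | A.mulVec x ≤ a ∧ 0 ≤ x})
    (hXne : X.Nonempty) (hXbd : Bornology.IsBounded X) :
    ((∃ hstar : ℝ,
        IsGreatest {h : ℝ | ∃ (u : Fin q → ℝ) (y : Fin m → ℝ),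
          -(Aᵀ.mulVec u) - C.mulVec y ≤ g ∧ a ⬝ᵥ u - e ⬝ᵥ y ≤ -h ∧ 0 ≤ u} hstar) ↔
      (∃ x : Fin n → ℝ, A.mulVec x ≤ a ∧ Cᵀ.mulVec x = -e ∧ 0 ≤ x)) ∧
    ((¬ ∃ x : Fin n → ℝ, A.mulVec x ≤ a ∧ Cᵀ.mulVec x = -e ∧ 0 ≤ x) →
      ∀ M : ℝ, ∃ (u : Fin q → ℝ) (y : Fin m → ℝ) (h : ℝ),
        (-(Aᵀ.mulVec u) - C.mulVec y ≤ g ∧ a ⬝ᵥ u - e ⬝ᵥ y ≤ -h ∧ 0 ≤ u) ∧ M < h) := by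
  subst hX
  have hfeas (u y h) : (-(Aᵀ *ᵥ u) - C *ᵥ y ≤ g ∧ a ⬝ᵥ u - e ⬝ᵥ y ≤ -h ∧ 0 ≤ u) ↔
      (0 ≤ u ∧ -Aᵀ *ᵥ u + -C *ᵥ y ≤ g) ∧ h ≤ -a ⬝ᵥ u + e ⬝ᵥ y := by
    rw [neg_mulVec, neg_mulVec, ← sub_eq_add_neg, neg_dotProduct]
    constructor
    · exact fun ⟨h₁, h₂, h₃⟩ => ⟨⟨h₃, h₁⟩, by linarith⟩
    · exact fun ⟨⟨h₃, h₁⟩, h₂⟩ => ⟨h₁, by linarith, h₃⟩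
  have hsys : (∃ x, A *ᵥ x ≤ a ∧ Cᵀ *ᵥ x = -e ∧ 0 ≤ x) ↔
      ∃ x, 0 ≤ x ∧ -a ≤ x ᵥ* -Aᵀ ∧ x ᵥ* -C = e := by
    simp only [vecMul_neg, vecMul_transpose, ← mulVec_transpose C, neg_le_neg_iff,
      neg_eq_iff_eq_neg]
    exact exists_congr fun x => ⟨fun ⟨h₁, h₂, h₃⟩ => ⟨h₃, h₁, h₂⟩, fun ⟨h₃, h₁, h₂⟩ => ⟨h₁, h₂, h₃⟩⟩
  obtain ⟨u₀, hu₀, hu₀g⟩ := exists_nonneg_neg_transpose_mulVec_le hXne hXbd g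
  have hP : ∃ u y, 0 ≤ u ∧ -Aᵀ *ᵥ u + -C *ᵥ y ≤ g := ⟨u₀, 0, hu₀, by simpa using hu₀g⟩
  have hunbdd (hs : ¬∃ x, A *ᵥ x ≤ a ∧ Cᵀ *ᵥ x = -e ∧ 0 ≤ x) (K : ℝ) :
      ∃ u y h, (-(Aᵀ *ᵥ u) - C *ᵥ y ≤ g ∧ a ⬝ᵥ u - e ⬝ᵥ y ≤ -h ∧ 0 ≤ u) ∧ K < h := by
    obtain ⟨u, y, hu, hK⟩ := exists_lt_of_not_exists_dual hP (hsys.not.1 hs) K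
    exact ⟨u, y, _, (hfeas ..).2 ⟨hu, le_rfl⟩, hK⟩
  refine ⟨⟨fun ⟨hstar, hmax⟩ => ?_, fun hs => ?_⟩, hunbdd⟩
  · by_contra hs
    obtain ⟨u, y, h, hu, hlt⟩ := hunbdd hs hstar
    exact (hmax.2 ⟨u, y, hu⟩).not_gt hlt
  · obtain ⟨u, y, hu, hmax⟩ := exists_maximizer_of_exists_dual hP (hsys.1 hs)
    refine ⟨_, ⟨u, y, (hfeas ..).2 ⟨hu, le_rfl⟩⟩, fun h ⟨u', y', hu'⟩ => ?_⟩
    obtain ⟨⟨hu'₀, hu'g⟩, hh⟩ := (hfeas ..).1 hu'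
    exact hh.trans (hmax u' y' hu'₀ hu'g)

/-- Corollary 4 of the paper: the linear program has a finite optimal solution
iff the system `{A x ≤ a, Cᵀ x = -e, x ≥ 0}` is consistent; otherwise the objective is
unbounded above. -/
theorem stmt_10
    (n m q : ℕ) (hn : 0 < n) (hm : 0 < m) (hq : 0 < q)
    (C : Matrix (Fin n) (Fin m) ℝ) (A : Matrix (Fin q) (Fin n) ℝ)
    (a : Fin q → ℝ) (g : Fin n → ℝ) (e : Fin m → ℝ)
    (X : Set (Fin n → ℝ))
    (hX : X = {x | A.mulVec x ≤ a ∧ 0 ≤ x})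
    (hXne : X.Nonempty) (hXbd : Bornology.IsBounded X) :
    ((∃ hstar : ℝ,
        IsGreatest {h : ℝ | ∃ (u : Fin q → ℝ) (y : Fin m → ℝ),
          -(Aᵀ.mulVec u) - C.mulVec y ≤ g ∧ a ⬝ᵥ u - e ⬝ᵥ y ≤ -h ∧ 0 ≤ u} hstar) ↔
      (∃ x : Fin n → ℝ, A.mulVec x ≤ a ∧ Cᵀ.mulVec x = -e ∧ 0 ≤ x)) ∧
    ((¬ ∃ x : Fin n → ℝ, A.mulVec x ≤ a ∧ Cᵀ.mulVec x = -e ∧ 0 ≤ x) →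
      ∀ M : ℝ, ∃ (u : Fin q → ℝ) (y : Fin m → ℝ) (h : ℝ),
        (-(Aᵀ.mulVec u) - C.mulVec y ≤ g ∧ a ⬝ᵥ u - e ⬝ᵥ y ≤ -h ∧ 0 ≤ u) ∧ M < h) :=
  stmt_10_general n m q C A a g e X hX hXne hXbd
end
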